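/- Let L be a bounded lattice with at least three elements. Then the clone generated by the lattice operations ∨ and ∧ together with all unary aggregation functions on L is a proper subset of the aggregation clone of L; in particular, for any a ∈ L with 0 < a < 1, the binary aggregation function ⊕_a does not belong to this clone. -/
import Mathlib


open Classical in
/-- The binary operation `⊕_b`: `1` if both arguments are `1`, `0` if both are `0`,
and `b` otherwise. -/
noncomputable def oplus {L : Type*} [Lattice L] [BoundedOrder L] (b x y : L) : L :=
  if x = ⊤ ∧ y = ⊤ then ⊤ else if x = ⊥ ∧ y = ⊥ then ⊥ else b

/-- An `n`-ary aggregation function on a bounded lattice: monotone (componentwise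
order on tuples) and preserving the bottom and top tuples. -/
def IsAgg {L : Type*} [Lattice L] [BoundedOrder L] {n : ℕ}
    (A : (Fin n → L) → L) : Prop :=
  Monotone A ∧ A ⊥ = ⊥ ∧ A ⊤ = ⊤

/-- Membership in the clone generated by a set `F` of finitary operations on `A`
(operations are recorded together with their arities): the smallest set of operations
containing `F` and all projections and closed under composition. -/
inductive GenClone {A : Type*} (F : Set ((n : ℕ) × ((Fin n → A) → A))) :
    ∀ {n : ℕ}, ((Fin n → A) → A) → Prop
  | mem (p : (n : ℕ) × ((Fin n → A) → A)) : p ∈ F → GenClone F p.2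
  | proj {n : ℕ} (i : Fin n) : GenClone F fun x => x i
  | comp {k n : ℕ} (f : (Fin k → A) → A) (g : Fin k → (Fin n → A) → A) :
      GenClone F f → (∀ i, GenClone F (g i)) → GenClone F fun x => f fun i => g i x

/-- The generating set consisting of the lattice operations `∨`, `∧` and all unary
aggregation functions on `L`. -/
def unaryAggGens (L : Type*) [Lattice L] [BoundedOrder L] :
    Set ((n : ℕ) × ((Fin n → L) → L)) :=
  {⟨2, fun x => x 0 ⊔ x 1⟩, ⟨2, fun x => x 0 ⊓ x 1⟩} ∪
    {p | ∃ u : L → L, Monotone u ∧ u ⊥ = ⊥ ∧ u ⊤ = ⊤ ∧ p = ⟨1, fun x => u (x 0)⟩}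


lemma key_lemma {L : Type*} [Lattice L] [BoundedOrder L] {n : ℕ}
    {A : (Fin n → L) → L} (h : GenClone (unaryAggGens L) A) :
    IsAgg A ∧ ∀ x : Fin n → L, (∀ i, x i = ⊥ ∨ x i = ⊤) → A x = ⊥ ∨ A x = ⊤ := by
  induction h with
  | mem p hp =>
    rcases hp with hp | ⟨u, hu, hub, hut, rfl⟩
    · rcases hp with hp | hp
      all_goals subst hp
      · refine ⟨⟨fun x y hxy => sup_le_sup (hxy 0) (hxy 1), by simp, by simp⟩, ?_⟩
        intro x hx
        rcases hx 0 with h0 | h0 <;> rcases hx 1 with h1 | h1 <;> simp [h0, h1]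
      · refine ⟨⟨fun x y hxy => inf_le_inf (hxy 0) (hxy 1), by simp, by simp⟩, ?_⟩
        intro x hx
        rcases hx 0 with h0 | h0 <;> rcases hx 1 with h1 | h1 <;> simp [h0, h1]
    · refine ⟨⟨fun x y hxy => hu (hxy 0), by simpa using hub, by simpa using hut⟩, ?_⟩
      intro x hx
      rcases hx 0 with h0 | h0 <;> simp [h0, hub, hut]
  | proj i =>
    exact ⟨⟨fun x y hxy => hxy i, rfl, rfl⟩, fun x hx => hx i⟩
  | comp f g hf hg ihf ihg =>
    obtain ⟨⟨fmono, fbot, ftop⟩, fbool⟩ := ihf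
    refine ⟨⟨fun x y hxy => fmono (fun i => ((ihg i).1).1 hxy), ?_, ?_⟩, ?_⟩
    · have : (fun i => g i ⊥) = (⊥ : Fin _ → L) := funext fun i => ((ihg i).1).2.1
      simp only [this, fbot]
    · have : (fun i => g i ⊤) = (⊤ : Fin _ → L) := funext fun i => ((ihg i).1).2.2
      simp only [this, ftop]
    · intro x hx
      exact fbool _ (fun i => (ihg i).2 x hx)

/-- Let `L` be a bounded lattice with at least three elements.  The clone generated
by the lattice operations together with all unary aggregation functions on `L` is a
proper subset of the aggregation clone of `L`: every member is an aggregation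
function, but for any `a ∈ L` with `0 < a < 1` the binary aggregation function `⊕_a`
does not belong to this clone. -/
theorem unary_agg_clone_proper {L : Type*} [Lattice L] [BoundedOrder L]
    (h3 : ∃ x y z : L, x ≠ y ∧ x ≠ z ∧ y ≠ z) :
    (∀ (n : ℕ) (A : (Fin n → L) → L), GenClone (unaryAggGens L) A → IsAgg A) ∧
    (∀ a : L, ⊥ < a → a < ⊤ →
      IsAgg (fun x : Fin 2 → L => oplus a (x 0) (x 1)) ∧
      ¬ GenClone (unaryAggGens L) (fun x : Fin 2 → L => oplus a (x 0) (x 1))) := by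
  constructor
  · intro n A h
    exact (key_lemma h).1
  · intro a ha hat
    have hbt : (⊥ : L) ≠ ⊤ := ha.trans hat |>.ne
    have hoplus_tb : oplus a ⊤ (⊥ : L) = a := by
      simp [oplus, hbt, hbt.symm]
    constructor
    · refine ⟨?_, ?_, ?_⟩
      · intro x y hxy
        simp only [oplus]
        by_cases hxt : x 0 = ⊤ ∧ x 1 = ⊤
        · have hyt : y 0 = ⊤ ∧ y 1 = ⊤ :=
            ⟨top_le_iff.mp (hxt.1 ▸ hxy 0), top_le_iff.mp (hxt.2 ▸ hxy 1)⟩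
          simp [hxt, hyt]
        rw [if_neg hxt]
        by_cases hxb : x 0 = ⊥ ∧ x 1 = ⊥
        · rw [if_pos hxb]; exact bot_le
        rw [if_neg hxb]
        by_cases hyb : y 0 = ⊥ ∧ y 1 = ⊥
        · exact absurd ⟨le_bot_iff.mp (hyb.1 ▸ hxy 0), le_bot_iff.mp (hyb.2 ▸ hxy 1)⟩ hxb
        rw [if_neg hyb]
        split_ifs with h
        · exact le_top
        · exact le_rfl
      · simp [oplus, hbt]
      · simp [oplus]
    · intro h
      have := (key_lemma h).2 (fun i => if i = 0 then ⊤ else ⊥) (by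
        intro i
        by_cases hi : i = 0 <;> simp [hi])
      simp only [show ((0 : Fin 2) = 0) = True by simp, if_true] at this
      rw [show (if (1 : Fin 2) = 0 then (⊤ : L) else ⊥) = ⊥ by norm_num] at this
      rw [hoplus_tb] at this
      rcases this with h' | h'
      · exact absurd h' ha.ne'
      · exact absurd h' hat.ne
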